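/- Let the finite low-rank MDP of dimension d satisfy ‖φ*_h(x, a)‖₂ ≤ 1 for all h, x, a, and suppose η-feature coverage holds for some η ∈ (0, 1]: for every h ∈ [H−1], sup_{π∈Π} λ_min(E^π[φ*_h(x_h, a_h) φ*_h(x_h, a_h)^⊤]) ≥ η, where λ_min denotes the smallest eigenvalue. Then the MDP satisfies (η/2)^{3/2}-reachability: for every h ∈ [H−1] and every x ∈ X_{h+1}, sup_{π∈Π} d^π(x) ≥ (η/2)^{3/2} · ‖μ*_{h+1}(x)‖₂. -/

import Mathlib

/-!
Test the smallest eigenvalue against the unit vector `v = μ(x) / ‖μ(x)‖`. Since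
`T(x | x', a) = ⟪μ(x), φ(x', a)⟫`, the number `⟪v, φ⟫` lies in `[0, 1]`, so
`λ_min(E^π[φ φᵀ]) ≤ E^π[⟪v, φ⟫²] ≤ E^π[⟪v, φ⟫] = d^π(x) / ‖μ(x)‖` for every policy `π`.
Taking the supremum over `π` and using coverage gives `sup_π d^π(x) ≥ η ‖μ(x)‖`, and
`(η / 2) ^ (3 / 2) ≤ η` for `η ≤ 2`.
-/

open scoped BigOperators RealInnerProductSpace

universe u v

variable {X : ℕ → Type u} {A : Type v} [∀ k, Fintype (X k)] [Fintype A]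

/-- Layers are 0-indexed: Lean layer `k` corresponds to the paper's layer `k + 1`.
`occ ρ T π k x = P^π[x_{k+1} = x]` is the state occupancy measure of the policy `π`. -/
noncomputable def occ (ρ : X 0 → ℝ) (T : ∀ k, X k → A → X (k + 1) → ℝ)
    (π : ∀ k, X k → A → ℝ) : ∀ k, X k → ℝ
  | 0, x => ρ x
  | k + 1, x' => ∑ x : X k, ∑ a : A, occ ρ T π k x * π k x a * T k x a x'

/-- A Markov policy: a probability distribution over actions at every state. -/
def IsPolicy (π : ∀ k, X k → A → ℝ) : Prop :=
  ∀ (k : ℕ) (x : X k), (∀ a, 0 ≤ π k x a) ∧ (∑ a : A, π k x a = 1)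

/-- An initial state distribution. -/
def IsInit (ρ : X 0 → ℝ) : Prop :=
  (∀ x, 0 ≤ ρ x) ∧ (∑ x : X 0, ρ x = 1)

/-- The smallest eigenvalue of a symmetric matrix `M`, characterized by the Courant–Fischer
variational formula as the infimum of the quadratic form `v ↦ vᵀ M v` over the unit
sphere. -/
noncomputable def lambdaMin (d : ℕ) (M : Matrix (Fin d) (Fin d) ℝ) : ℝ :=
  ⨅ v : {v : EuclideanSpace ℝ (Fin d) // ‖v‖ = 1}, ∑ i, ∑ j, v.1 i * M i j * v.1 j

/-- `E^π[φ_h(x_h,a_h) φ_h(x_h,a_h)ᵀ]`, the second moment matrix of the features under `π`. -/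
noncomputable def featSecondMoment (d : ℕ) (ρ : X 0 → ℝ)
    (T : ∀ k, X k → A → X (k + 1) → ℝ) (φ : ∀ k, X k → A → EuclideanSpace ℝ (Fin d))
    (π : ∀ k, X k → A → ℝ) (h : ℕ) : Matrix (Fin d) (Fin d) ℝ :=
  ∑ x : X h, ∑ a : A, (occ ρ T π h x * π h x a) • Matrix.of fun i j => φ h x a i * φ h x a j

section SecondMoment

variable {ι κ : Type*} [Fintype ι] [Fintype κ] {d : ℕ}

lemma quadForm_sum_smul_outer (w : ι → κ → ℝ) (φ : ι → κ → EuclideanSpace ℝ (Fin d))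
    (v : EuclideanSpace ℝ (Fin d)) :
    ∑ i, ∑ j, v i * (∑ x, ∑ a, w x a • Matrix.of fun i j => φ x a i * φ x a j) i j * v j
      = ∑ x, ∑ a, w x a * ⟪v, φ x a⟫ ^ 2 := by
  have hquad : ∀ M : Matrix (Fin d) (Fin d) ℝ,
      ∑ i, ∑ j, v i * M i j * v j = dotProduct v (M.mulVec v) := fun M => by
    simp only [dotProduct, Matrix.mulVec, Finset.mul_sum]
    exact Finset.sum_congr rfl fun i _ => Finset.sum_congr rfl fun j _ => by ring
  have hinner : ∀ x a, ⟪v, φ x a⟫ = dotProduct (φ x a) v := fun x a => by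
    simp [EuclideanSpace.inner_eq_star_dotProduct]
  have houter : ∀ x a,
      (Matrix.of fun i j => φ x a i * φ x a j) = Matrix.vecMulVec (φ x a) (φ x a) := fun _ _ => rfl
  simp only [hquad, houter, hinner, Matrix.sum_mulVec, Matrix.smul_mulVec,
    Matrix.vecMulVec_mulVec, op_smul_eq_smul, dotProduct_sum, dotProduct_smul, smul_eq_mul]
  simp only [dotProduct_comm v.ofLp, sq]

lemma lambdaMin_le_quadForm (M : Matrix (Fin d) (Fin d) ℝ)
    (hM : ∀ u : EuclideanSpace ℝ (Fin d), 0 ≤ ∑ i, ∑ j, u i * M i j * u j)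
    {v : EuclideanSpace ℝ (Fin d)} (hv : ‖v‖ = 1) :
    lambdaMin d M ≤ ∑ i, ∑ j, v i * M i j * v j :=
  ciInf_le ⟨0, by rintro _ ⟨u, rfl⟩; exact hM u⟩
    (⟨v, hv⟩ : {v : EuclideanSpace ℝ (Fin d) // ‖v‖ = 1})

lemma lambdaMin_mul_norm_le (w : ι → κ → ℝ) (hw : ∀ x a, 0 ≤ w x a)
    (φ : ι → κ → EuclideanSpace ℝ (Fin d)) (hφ : ∀ x a, ‖φ x a‖ ≤ 1)
    (m : EuclideanSpace ℝ (Fin d)) (hm : ∀ x a, 0 ≤ ⟪m, φ x a⟫) :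
    lambdaMin d (∑ x, ∑ a, w x a • Matrix.of fun i j => φ x a i * φ x a j) * ‖m‖
      ≤ ∑ x, ∑ a, w x a * ⟪m, φ x a⟫ := by
  rcases eq_or_ne m 0 with rfl | hm0
  · simp
  have hnorm : 0 < ‖m‖ := norm_pos_iff.mpr hm0
  set v : EuclideanSpace ℝ (Fin d) := ‖m‖⁻¹ • m
  have hv : ‖v‖ = 1 := by simp [v, norm_smul, hnorm.ne']
  have hsq : ∀ x a, ⟪v, φ x a⟫ ^ 2 ≤ ⟪v, φ x a⟫ := fun x a => by
    have h0 : 0 ≤ ⟪v, φ x a⟫ := by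
      simpa [v, real_inner_smul_left] using mul_nonneg (inv_nonneg.mpr hnorm.le) (hm x a)
    have h1 : ⟪v, φ x a⟫ ≤ 1 := (real_inner_le_norm _ _).trans (by rw [hv, one_mul]; exact hφ x a)
    nlinarith
  rw [← le_div_iff₀ hnorm]
  calc _ ≤ ∑ x, ∑ a, w x a * ⟪v, φ x a⟫ ^ 2 := by
        rw [← quadForm_sum_smul_outer]
        refine lambdaMin_le_quadForm _ (fun u => ?_) hv
        rw [quadForm_sum_smul_outer]
        exact Finset.sum_nonneg fun x _ => Finset.sum_nonneg fun a _ =>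
          mul_nonneg (hw x a) (sq_nonneg _)
    _ ≤ ∑ x, ∑ a, w x a * ⟪v, φ x a⟫ := by gcongr with x _ a _; exacts [hw x a, hsq x a]
    _ = (∑ x, ∑ a, w x a * ⟪m, φ x a⟫) / ‖m‖ := by
        simp only [v, real_inner_smul_left, Finset.sum_div]
        congr! 2 with x _ a _
        field_simp

end SecondMoment

section Occupancy

variable {ρ : X 0 → ℝ} {T : ∀ k, X k → A → X (k + 1) → ℝ} {π : ∀ k, X k → A → ℝ}

lemma occ_nonneg (hρ : ∀ x, 0 ≤ ρ x) (hπ : ∀ k x a, 0 ≤ π k x a) :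
    ∀ j, (∀ k < j, ∀ x a x', 0 ≤ T k x a x') → ∀ x, 0 ≤ occ ρ T π j x
  | 0, _ => hρ
  | j + 1, hT => fun x' =>
    Finset.sum_nonneg fun x _ => Finset.sum_nonneg fun a _ =>
      mul_nonneg (mul_nonneg (occ_nonneg hρ hπ j (fun k hk => hT k (by omega)) x) (hπ j x a))
        (hT j j.lt_succ_self x a x')

lemma sum_occ_eq_one (hρ : ∑ x, ρ x = 1) (hπ : ∀ k x, ∑ a, π k x a = 1) :
    ∀ j, (∀ k < j, ∀ x a, ∑ x', T k x a x' = 1) → ∑ x, occ ρ T π j x = 1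
  | 0, _ => hρ
  | j + 1, hT =>
    calc ∑ x', occ ρ T π (j + 1) x'
        = ∑ x, ∑ a, occ ρ T π j x * π j x a * ∑ x', T j x a x' := by
          simp only [occ, Finset.mul_sum]
          rw [Finset.sum_comm]
          exact Finset.sum_congr rfl fun _ _ => Finset.sum_comm
      _ = ∑ x, occ ρ T π j x := by
          simp only [hT j j.lt_succ_self, mul_one, ← Finset.mul_sum, hπ]
      _ = 1 := sum_occ_eq_one hρ hπ j fun k hk => hT k (by omega)

lemma occ_le_one (hρ : IsInit ρ) (hπ : IsPolicy π) (j : ℕ)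
    (hT : ∀ k < j, ∀ x a, (∀ x', 0 ≤ T k x a x') ∧ ∑ x', T k x a x' = 1) (x : X j) :
    occ ρ T π j x ≤ 1 := by
  rw [← sum_occ_eq_one hρ.2 (fun k x => (hπ k x).2) j fun k hk x a => (hT k hk x a).2]
  exact Finset.single_le_sum
    (fun y _ => occ_nonneg hρ.1 (fun k x => (hπ k x).1) j (fun k hk x a => (hT k hk x a).1) y)
    (Finset.mem_univ x)

lemma lambdaMin_featSecondMoment_mul_norm_le_occ {d : ℕ} (hρ : ∀ x, 0 ≤ ρ x)
    (hπ : ∀ k x a, 0 ≤ π k x a) (φ : ∀ k, X k → A → EuclideanSpace ℝ (Fin d)) (k : ℕ)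
    (μ : X (k + 1) → EuclideanSpace ℝ (Fin d)) (hT : ∀ j ≤ k, ∀ x a x', 0 ≤ T j x a x')
    (hlow : ∀ x a x', T k x a x' = ⟪μ x', φ k x a⟫) (hφ : ∀ x a, ‖φ k x a‖ ≤ 1)
    (x : X (k + 1)) :
    lambdaMin d (featSecondMoment d ρ T φ π k) * ‖μ x‖ ≤ occ ρ T π (k + 1) x := by
  have hw : ∀ y a, 0 ≤ occ ρ T π k y * π k y a := fun y a =>
    mul_nonneg (occ_nonneg hρ hπ k (fun j hj => hT j hj.le) y) (hπ k y a)
  have hocc : occ ρ T π (k + 1) x = ∑ y, ∑ a, occ ρ T π k y * π k y a * ⟪μ x, φ k y a⟫ := by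
    simp only [occ, hlow]
  rw [hocc]
  exact lambdaMin_mul_norm_le _ hw _ hφ _ fun y a => hlow y a x ▸ hT k le_rfl y a x

end Occupancy

lemma half_rpow_three_halves_le {η : ℝ} (hη0 : 0 ≤ η) (hη2 : η ≤ 2) :
    (η / 2) ^ ((3 : ℝ) / 2) ≤ η :=
  (Real.rpow_le_self_of_le_one (by positivity) (by linarith) (by norm_num)).trans (by linarith)

theorem stmt_10_general (H d : ℕ)
    (ρ : X 0 → ℝ) (hρ : IsInit ρ)
    (T : ∀ k, X k → A → X (k + 1) → ℝ)
    (hT : ∀ k, k + 2 ≤ H → ∀ (x : X k) (a : A),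
      (∀ x', 0 ≤ T k x a x') ∧ (∑ x', T k x a x' = 1))
    (φ : ∀ k, X k → A → EuclideanSpace ℝ (Fin d))
    (μ : ∀ k, X k → EuclideanSpace ℝ (Fin d))
    (hlow : ∀ k, k + 2 ≤ H → ∀ (x : X k) (a : A) (x' : X (k + 1)),
      T k x a x' = ⟪μ (k + 1) x', φ k x a⟫)
    (hφn : ∀ k, k + 2 ≤ H → ∀ (x : X k) (a : A), ‖φ k x a‖ ≤ 1)
    (η : ℝ) (hη : η ∈ Set.Ioc (0 : ℝ) 1)
    (hcov : ∀ k, k + 2 ≤ H →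
      η ≤ ⨆ π' : {π' : ∀ k, X k → A → ℝ // IsPolicy π'},
        lambdaMin d (featSecondMoment d ρ T φ π'.1 k)) :
    ∀ k, k + 2 ≤ H → ∀ x : X (k + 1),
      (η / 2) ^ ((3 : ℝ) / 2) * ‖μ (k + 1) x‖ ≤
        ⨆ π' : {π' : ∀ k, X k → A → ℝ // IsPolicy π'}, occ ρ T π'.1 (k + 1) x := by
  intro k hk x
  have hTbelow : ∀ j < k + 1, ∀ x a, (∀ x', 0 ≤ T j x a x') ∧ ∑ x', T j x a x' = 1 :=
    fun j hj => hT j (by omega)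
  have hkey : ∀ π' : {π' : ∀ k, X k → A → ℝ // IsPolicy π'},
      lambdaMin d (featSecondMoment d ρ T φ π'.1 k) * ‖μ (k + 1) x‖ ≤ occ ρ T π'.1 (k + 1) x :=
    fun π' => lambdaMin_featSecondMoment_mul_norm_le_occ hρ.1 (fun k x => (π'.2 k x).1) φ k
      (μ (k + 1)) (fun j hj x a => (hTbelow j (by omega) x a).1) (hlow k hk) (hφn k hk) x
  have hbdd : BddAbove (Set.range fun π' : {π' : ∀ k, X k → A → ℝ // IsPolicy π'} =>
      occ ρ T π'.1 (k + 1) x) :=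
    ⟨1, by rintro _ ⟨π', rfl⟩; exact occ_le_one hρ π'.2 (k + 1) hTbelow x⟩
  calc (η / 2) ^ ((3 : ℝ) / 2) * ‖μ (k + 1) x‖ ≤ η * ‖μ (k + 1) x‖ := by
        gcongr; exact half_rpow_three_halves_le hη.1.le (by linarith [hη.2])
    _ ≤ (⨆ π' : {π' : ∀ k, X k → A → ℝ // IsPolicy π'},
          lambdaMin d (featSecondMoment d ρ T φ π'.1 k)) * ‖μ (k + 1) x‖ := by
        gcongr; exact hcov k hk
    _ ≤ _ := by
        rw [Real.iSup_mul_of_nonneg (norm_nonneg _)]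
        exact ciSup_mono hbdd hkey

/-- (Feature coverage implies reachability.)  If the features are
bounded by `1` and `η`-feature coverage holds at every layer, i.e.
`sup_π λ_min(E^π[φ_h φ_hᵀ]) ≥ η`, then `(η/2)^{3/2}`-reachability holds: every state `x`
of the next layer satisfies `sup_π d^π(x) ≥ (η/2)^{3/2} ‖μ(x)‖₂`. -/
theorem stmt_10 (H d : ℕ) (hd : 1 ≤ d) (hH : 2 ≤ H)
    (ρ : X 0 → ℝ) (hρ : IsInit ρ)
    (T : ∀ k, X k → A → X (k + 1) → ℝ)
    (hT : ∀ k, k + 2 ≤ H → ∀ (x : X k) (a : A),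
      (∀ x', 0 ≤ T k x a x') ∧ (∑ x', T k x a x' = 1))
    (φ : ∀ k, X k → A → EuclideanSpace ℝ (Fin d))
    (μ : ∀ k, X k → EuclideanSpace ℝ (Fin d))
    (hlow : ∀ k, k + 2 ≤ H → ∀ (x : X k) (a : A) (x' : X (k + 1)),
      T k x a x' = ⟪μ (k + 1) x', φ k x a⟫)
    (hφn : ∀ k, k + 2 ≤ H → ∀ (x : X k) (a : A), ‖φ k x a‖ ≤ 1)
    (η : ℝ) (hη : η ∈ Set.Ioc (0 : ℝ) 1)
    (hcov : ∀ k, k + 2 ≤ H →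
      η ≤ ⨆ π' : {π' : ∀ k, X k → A → ℝ // IsPolicy π'},
        lambdaMin d (featSecondMoment d ρ T φ π'.1 k)) :
    ∀ k, k + 2 ≤ H → ∀ x : X (k + 1),
      (η / 2) ^ ((3 : ℝ) / 2) * ‖μ (k + 1) x‖ ≤
        ⨆ π' : {π' : ∀ k, X k → A → ℝ // IsPolicy π'}, occ ρ T π'.1 (k + 1) x :=
  stmt_10_general H d ρ hρ T hT φ μ hlow hφn η hη hcov
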